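/- arXiv:2603.16539 — 2 statements merged into one kernel-verified Lean document; each statement's English description precedes it below -/
import Mathlib

section
/- Let n be a natural number and let A be an n×n quaternion matrix. If every right eigenvalue λ of A satisfies |λ| < 1 (i.e., the right spectral radius of A is less than 1), then 1 + A is a unit in the ring of n×n quaternion matrices. -/
notation "ℍ" => Quaternion ℝ

/-- `lam` is a right eigenvalue of the quaternion matrix `M`. -/
def IsRightEigenvalue {n : ℕ} (M : Matrix (Fin n) (Fin n) ℍ) (lam : ℍ) : Prop :=
  ∃ x : Fin n → ℍ, x ≠ 0 ∧ M.mulVec x = fun i => x i * lam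

instance : Module.Finite ℍᵐᵒᵖ ℍ :=
  Module.Finite.of_surjective (LinearMap.toSpanSingleton ℍᵐᵒᵖ ℍ 1)
    (fun x => ⟨MulOpposite.op x, by simp [LinearMap.toSpanSingleton_apply]⟩)

/-- `mulVec` as an `ℍᵐᵒᵖ`-linear map. -/
def mulVecRight {n : ℕ} (M : Matrix (Fin n) (Fin n) ℍ) :
    (Fin n → ℍ) →ₗ[ℍᵐᵒᵖ] (Fin n → ℍ) where
  toFun := M.mulVec
  map_add' x y := Matrix.mulVec_add M x y
  map_smul' c x := by
    funext i
    simp only [Matrix.mulVec, dotProduct, Pi.smul_apply, MulOpposite.smul_eq_mul_unop,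
      RingHom.id_apply, Finset.sum_mul, mul_assoc]

theorem isUnit_of_mulVec_injective {n : ℕ} {M : Matrix (Fin n) (Fin n) ℍ}
    (hM : Function.Injective M.mulVec) : IsUnit M := by
  have key : ∀ N : Matrix (Fin n) (Fin n) ℍ, Function.Injective N.mulVec →
      ∃ B, N * B = 1 := by
    intro N hN
    have : Function.Surjective (mulVecRight N) :=
      (LinearMap.injective_iff_surjective (f := mulVecRight N)).1 hN
    exact Matrix.mulVec_surjective_iff_exists_right_inverse.1 this
  obtain ⟨B, hB⟩ := key M hM
  have hBinj : Function.Injective B.mulVec := by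
    intro x y hxy
    have := congrArg M.mulVec hxy
    simpa [Matrix.mulVec_mulVec, hB] using this
  obtain ⟨C, hC⟩ := key B hBinj
  have hCM : C = M := by
    calc C = (M * B) * C := by rw [hB, one_mul]
    _ = M * (B * C) := by rw [mul_assoc]
    _ = M := by rw [hC, mul_one]
  exact ⟨⟨M, B, hB, hCM ▸ hC⟩, rfl⟩

/-- If every right eigenvalue of the quaternion matrix `A` has modulus less than `1`,
then `1 + A` is invertible. -/
theorem one_add_isUnit_of_rightSpectralRadius_lt_one {n : ℕ}
    (A : Matrix (Fin n) (Fin n) ℍ)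
    (h : ∀ lam : ℍ, IsRightEigenvalue A lam → ‖lam‖ < 1) :
    IsUnit (1 + A) := by
  apply isUnit_of_mulVec_injective
  intro x y hxy
  by_contra hne
  have hz : x - y ≠ 0 := sub_ne_zero.mpr hne
  have h0 : (1 + A).mulVec (x - y) = 0 := by
    rw [Matrix.mulVec_sub, hxy, sub_self]
  have hA : A.mulVec (x - y) = fun i => (x - y) i * (-1 : ℍ) := by
    funext i
    have h1 := congrFun h0 i
    simp only [Matrix.add_mulVec, Matrix.one_mulVec, Pi.add_apply, Pi.zero_apply] at h1
    have h2 : A.mulVec (x - y) i = -((x - y) i) := eq_neg_of_add_eq_zero_right h1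
    rw [h2, mul_neg_one]
  have hlt := h (-1) ⟨x - y, hz, hA⟩
  simp at hlt
end

section
/- Every square quaternion matrix is similar to an upper triangular quaternion matrix: for every A ∈ Matrix (Fin n) (Fin n) ℍ there exist a unit P of the matrix ring and a matrix J with J i j = 0 whenever j < i, such that A = P * J * P⁻¹. -/
/-!
The argument is the usual induction on the size, with complex eigenvalues standing in for
the missing algebraic closedness of `ℍ`. Through right multiplication by `ℂ ⊆ ℍ`, the column
space `ℍⁿ` is a finite-dimensional complex vector space on which `A` acts `ℂ`-linearly, so `A`
has a right eigenvector `A v = v q`. Completing `v` to an invertible matrix `P` with first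
column `v` makes the first column of `P⁻¹ A P` vanish below the diagonal, and the
triangularization of the lower-right block lifts along `M ↦ diag(1, M)`.
-/

open Matrix

namespace Matrix

section Ring

variable {R ι : Type*} [Ring R] [Fintype ι] [DecidableEq ι]

/-- Sherman–Morrison: `(1 + u wᵀ)⁻¹ = 1 - u s wᵀ` with `s = (1 + wᵀ u)⁻¹`. -/
theorem isUnit_one_add_vecMulVec {u w : ι → R} (h : IsUnit (1 + w ⬝ᵥ u)) :
    IsUnit (1 + vecMulVec u w) := by
  obtain ⟨s, hs⟩ := h
  have hs₁ : (1 + w ⬝ᵥ u) * ↑s⁻¹ = 1 := by rw [← hs, Units.mul_inv]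
  have hs₂ : ↑s⁻¹ * (1 + w ⬝ᵥ u) = 1 := by rw [← hs, Units.inv_mul]
  refine ⟨⟨1 + vecMulVec u w, 1 - vecMulVec u ((↑s⁻¹ : R) • w), ?_, ?_⟩, rfl⟩
  · calc (1 + vecMulVec u w) * (1 - vecMulVec u ((↑s⁻¹ : R) • w))
        _ = 1 + vecMulVec u ((1 - (1 + w ⬝ᵥ u) * ↑s⁻¹) • w) := by
          simp only [mul_sub, add_mul, one_mul, mul_one, vecMulVec_mul_vecMulVec, smul_smul,
            sub_smul, add_smul, one_smul, vecMulVec_sub, vecMulVec_add]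
          abel
        _ = 1 := by rw [hs₁, sub_self, zero_smul, vecMulVec_zero, add_zero]
  · calc (1 - vecMulVec u ((↑s⁻¹ : R) • w)) * (1 + vecMulVec u w)
        _ = 1 + vecMulVec u ((1 - ↑s⁻¹ * (1 + w ⬝ᵥ u)) • w) := by
          simp only [sub_mul, mul_add, one_mul, mul_one, vecMulVec_mul_vecMulVec,
            smul_dotProduct, smul_eq_mul, sub_smul, add_smul, one_smul, vecMulVec_sub,
            vecMulVec_add]
          abel
        _ = 1 := by rw [hs₂, sub_self, zero_smul, vecMulVec_zero, add_zero]

theorem mul_mul_apply_eq_zero_of_mulVec_col {P P' A : Matrix ι ι R} (hP : P' * P = 1)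
    {j : ι} {q : R} (hA : A *ᵥ P.col j = MulOpposite.op q • P.col j) {i : ι} (hij : i ≠ j) :
    (P' * A * P) i j = 0 :=
  calc (P' * A * P) i j
      _ = (P' * P) i j * q := by
        rw [mul_mul_apply]
        change P' i ⬝ᵥ A *ᵥ P.col j = _
        rw [hA, dotProduct_smul, MulOpposite.smul_eq_mul_unop, MulOpposite.unop_op]
        rfl
      _ = 0 := by rw [hP, one_apply_ne hij, zero_mul]

end Ring

theorem exists_units_col_zero_eq {D : Type*} [DivisionRing D] {n : ℕ}
    {v : Fin (n + 1) → D} (hv : v ≠ 0) :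
    ∃ P : (Matrix (Fin (n + 1)) (Fin (n + 1)) D)ˣ,
      (P : Matrix (Fin (n + 1)) (Fin (n + 1)) D).col 0 = v := by
  -- `P = 1 + (v - e₀) wᵀ` has first column `v`, and `1 + wᵀ (v - e₀) = wᵀ v`
  obtain ⟨w, hw₀, hwv⟩ : ∃ w : Fin (n + 1) → D, w 0 = 1 ∧ w ⬝ᵥ v ≠ 0 := by
    by_cases hv₀ : v 0 = 0
    · obtain ⟨k, hk⟩ := Function.ne_iff.mp hv
      have hk₀ : k ≠ 0 := by rintro rfl; exact hk hv₀
      refine ⟨Pi.single 0 1 + Pi.single k 1, by simp [hk₀.symm], ?_⟩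
      simpa [add_dotProduct, hv₀] using hk
    · exact ⟨Pi.single 0 1, by simp, by simpa using hv₀⟩
  have hP : IsUnit (1 + vecMulVec (v - Pi.single 0 1) w) :=
    isUnit_one_add_vecMulVec (by simpa [dotProduct_sub, hw₀] using hwv)
  refine ⟨hP.unit, funext fun i => ?_⟩
  rw [IsUnit.unit_spec, col_apply, add_apply, vecMulVec_apply, hw₀, mul_one, one_apply,
    Pi.sub_apply, Pi.single_apply]
  split_ifs <;> abel

section OneBlockDiag

variable {R : Type*} [Semiring R] {n : ℕ}

/-- The block diagonal matrix `diag(1, M)`. -/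
def oneBlockDiag : Matrix (Fin n) (Fin n) R →* Matrix (Fin (n + 1)) (Fin (n + 1)) R where
  toFun M := of (Fin.cons (Pi.single 0 1) fun i => Fin.cons 0 (M i))
  map_one' := by
    ext i j
    cases i using Fin.cases <;> cases j using Fin.cases <;> simp [one_apply, eq_comm]
  map_mul' M N := by
    ext i j
    cases i using Fin.cases <;> cases j using Fin.cases <;> simp [mul_apply, Fin.sum_univ_succ]

theorem oneBlockDiag_mul_apply_succ (M : Matrix (Fin n) (Fin n) R)
    (B : Matrix (Fin (n + 1)) (Fin (n + 1)) R) (i : Fin n) (j : Fin (n + 1)) :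
    (oneBlockDiag M * B) i.succ j = ∑ k, M i k * B k.succ j := by
  simp [oneBlockDiag, mul_apply, Fin.sum_univ_succ]

theorem mul_oneBlockDiag_apply_zero (B : Matrix (Fin (n + 1)) (Fin (n + 1)) R)
    (M : Matrix (Fin n) (Fin n) R) (i : Fin (n + 1)) :
    (B * oneBlockDiag M) i 0 = B i 0 := by
  simp [oneBlockDiag, mul_apply, Fin.sum_univ_succ]

theorem mul_oneBlockDiag_apply_succ (B : Matrix (Fin (n + 1)) (Fin (n + 1)) R)
    (M : Matrix (Fin n) (Fin n) R) (i : Fin (n + 1)) (j : Fin n) :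
    (B * oneBlockDiag M) i j.succ = ∑ k, B i k.succ * M k j := by
  simp [oneBlockDiag, mul_apply, Fin.sum_univ_succ]

theorem blockTriangular_oneBlockDiag_mul_mul {B : Matrix (Fin (n + 1)) (Fin (n + 1)) R}
    (hB : ∀ i : Fin n, B i.succ 0 = 0) {M N : Matrix (Fin n) (Fin n) R}
    (h : (M * B.submatrix Fin.succ Fin.succ * N).BlockTriangular id) :
    (oneBlockDiag M * B * oneBlockDiag N).BlockTriangular id := by
  intro i j hij
  cases i using Fin.cases with
  | zero => exact absurd hij (Fin.not_lt_zero j)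
  | succ i =>
    rw [Matrix.mul_assoc, oneBlockDiag_mul_apply_succ]
    cases j using Fin.cases with
    | zero => simp only [mul_oneBlockDiag_apply_zero, hB, mul_zero, Finset.sum_const_zero]
    | succ j =>
      have hij' := h (Fin.succ_lt_succ_iff.mp hij)
      rw [Matrix.mul_assoc] at hij'
      simp_rw [mul_oneBlockDiag_apply_succ]
      simpa only [mul_apply, submatrix_apply] using hij'

end OneBlockDiag

theorem exists_units_blockTriangular_inv_mul_mul {D : Type*} [DivisionRing D]
    (hD : ∀ (m : ℕ) (B : Matrix (Fin (m + 1)) (Fin (m + 1)) D),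
      ∃ v ≠ 0, ∃ q : D, B *ᵥ v = MulOpposite.op q • v) :
    ∀ {n : ℕ} (A : Matrix (Fin n) (Fin n) D),
      ∃ P : (Matrix (Fin n) (Fin n) D)ˣ,
        (P⁻¹ * A * P : Matrix (Fin n) (Fin n) D).BlockTriangular id
  | 0, _ => ⟨1, fun i => i.elim0⟩
  | n + 1, A => by
    obtain ⟨v, hv, q, hAv⟩ := hD n A
    obtain ⟨P, hPv⟩ := exists_units_col_zero_eq hv
    set B : Matrix (Fin (n + 1)) (Fin (n + 1)) D := P⁻¹ * A * P
    have hB : ∀ i : Fin n, B i.succ 0 = 0 := fun i =>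
      mul_mul_apply_eq_zero_of_mulVec_col P.inv_mul (hPv ▸ hAv) (Fin.succ_ne_zero i)
    obtain ⟨Q, hQ⟩ :=
      exists_units_blockTriangular_inv_mul_mul hD (B.submatrix Fin.succ Fin.succ)
    refine ⟨P * Units.map oneBlockDiag Q, ?_⟩
    convert blockTriangular_oneBlockDiag_mul_mul hB hQ using 1
    simp only [_root_.mul_inv_rev, Units.val_mul, Units.coe_map_inv, Units.coe_map, B,
      Matrix.mul_assoc]

end Matrix

section RightEigenvector

open Quaternion (ofComplex)

/-- `ℍ` as a complex vector space through right multiplication, so that left multiplication by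
a quaternion matrix is `ℂ`-linear on columns. -/
noncomputable local instance : Module ℂ ℍ :=
  Module.compHom ℍ (ofComplex.toOpposite fun x y => (Commute.all x y).map ofComplex).toRingHom

local instance : IsScalarTower ℝ ℂ ℍ where
  smul_assoc r c q := by
    change q * ofComplex (r • c) = r • (q * ofComplex c)
    rw [map_smul, mul_smul_comm]

local instance : Module.Finite ℂ ℍ := .of_restrictScalars_finite ℝ ℂ ℍ

theorem Quaternion.exists_mulVec_eq_op_smul {ι : Type*} [Fintype ι] [Nonempty ι]
    (A : Matrix ι ι ℍ) : ∃ v ≠ 0, ∃ q : ℍ, A *ᵥ v = MulOpposite.op q • v := by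
  let f : Module.End ℂ (ι → ℍ) :=
    { toFun := A.mulVec
      map_add' := A.mulVec_add
      map_smul' c := A.mulVec_smul (MulOpposite.op (ofComplex c)) }
  obtain ⟨μ, hμ⟩ := f.exists_eigenvalue
  obtain ⟨v, hv⟩ := hμ.exists_hasEigenvector
  exact ⟨v, hv.2, ofComplex μ, hv.apply_eq_smul⟩

end RightEigenvector

/-- Every square quaternion matrix is similar to an upper triangular quaternion matrix. -/
theorem exists_similar_upper_triangular {n : ℕ} (A : Matrix (Fin n) (Fin n) ℍ) :
    ∃ P J : Matrix (Fin n) (Fin n) ℍ, IsUnit P ∧ (∀ i j : Fin n, j < i → J i j = 0) ∧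
      A = P * J * Ring.inverse P := by
  obtain ⟨P, hP⟩ := exists_units_blockTriangular_inv_mul_mul
    (fun _ => Quaternion.exists_mulVec_eq_op_smul) A
  refine ⟨P, P⁻¹ * A * P, P.isUnit, fun _ _ hij => hP hij, ?_⟩
  rw [Ring.inverse_unit]
  simp only [Matrix.mul_assoc, Units.mul_inv, Matrix.mul_one, Units.mul_inv_cancel_left]
end
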